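/- arXiv:1405.0022 — 5 statements merged into one kernel-verified Lean document; each statement's English description precedes it below -/
import Mathlib

section
/- If A ⊆ ℕ is a co-infinite set whose complement is computably enumerable (i.e., A is co-c.e. and co-infinite), then there is a computable permutation π : ℕ → ℕ such that π(A) has asymptotic density 0. -/
/-!
Searching the enumeration of the c.e. set `Aᶜ` computably yields an element of `Aᶜ` above any
given bound; iterating this search, and restarting it one past the previous hit, enumerates an
infinite computable set `C ⊆ Aᶜ` whose gaps keep its complement infinite. Any two computable
sets that are infinite and co-infinite are matched by the computable permutation sending the
`k`-th element of one to the `k`-th element of the other, and likewise for their complements.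
Matching `Cᶜ ⊇ A` with the positive squares sends `A` into a set of density zero.
-/

open Filter

open scoped Classical

/-- The `n`-th partial density of `S ⊆ ℕ`: `|S ∩ [0,n)| / n`. -/
noncomputable def partialDensity (S : Set ℕ) (n : ℕ) : ℝ :=
  (((Finset.range n).filter (fun m => m ∈ S)).card : ℝ) / n

/-- `S` has asymptotic density `d`. -/
def HasDensity (S : Set ℕ) (d : ℝ) : Prop :=
  Tendsto (partialDensity S) atTop (nhds d)

/-- The upper asymptotic density of `S`. -/
noncomputable def upperDensity (S : Set ℕ) : ℝ :=
  limsup (partialDensity S) atTop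

/-- The lower asymptotic density of `S`. -/
noncomputable def lowerDensity (S : Set ℕ) : ℝ :=
  liminf (partialDensity S) atTop

/-- A computable permutation of `ℕ`. -/
def ComputablePerm (π : ℕ → ℕ) : Prop :=
  Function.Bijective π ∧ Computable π

/-- `A` is computably enumerable: the domain of a partial computable function. -/
def CE (A : Set ℕ) : Prop :=
  ∃ f : ℕ →. ℕ, Partrec f ∧ ∀ n, n ∈ A ↔ (f n).Dom

/-- The principal function of `S`: `p_S n` is the least `x` with `|S ∩ [0,x)| ≥ n`. -/
noncomputable def principalFn (S : Set ℕ) (n : ℕ) : ℕ :=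
  sInf {x | n ≤ ((Finset.range x).filter (fun m => m ∈ S)).card}

namespace Nat

section Count

variable {p : ℕ → Prop} [DecidablePred p]

theorem computable_count (hp : ComputablePred p) : Computable (count p) := by
  have hstep :
      Computable₂ fun (_ : ℕ) (x : ℕ × ℕ) => x.2 + bif decide (p x.1) then 1 else 0 :=
    (Primrec.nat_add.to_comp.comp (Computable.snd.comp Computable.snd)
      (Computable.cond (hp.decide.comp (Computable.fst.comp Computable.snd))
        (Computable.const 1) (Computable.const 0))).to₂
  refine (Computable.nat_rec Computable.id (Computable.const 0) hstep).of_eq fun n => ?_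
  induction n with
  | zero => simp
  | succ n ih =>
    dsimp only [id] at ih ⊢
    by_cases h : p n <;> simp [count_succ, h, ih]

theorem computable_nth (hp : ComputablePred p) (hinf : (Set.ofPred p).Infinite) :
    Computable (nth p) := by
  have hex : ∀ k, ∃ n, p n ∧ count p n = k := fun k =>
    ⟨nth p k, nth_mem_of_infinite hinf k, count_nth_of_infinite hinf k⟩
  have hdec : ComputablePred fun x : ℕ × ℕ => p x.2 ∧ count p x.2 = x.1 :=
    Computable.computablePred <| (Primrec.and.to_comp.comp (hp.decide.comp Computable.snd)
      (Primrec.eq.decide.to_comp.comp ((computable_count hp).comp Computable.snd)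
        Computable.fst)).of_eq fun x => by simp
  refine (Computable.find hdec hex).of_eq fun k => ?_
  obtain ⟨hpn, hcount⟩ := Nat.find_spec (hex k)
  rw [← hcount, nth_count hpn, hcount]

end Count

noncomputable def nthMatch (p q : ℕ → Prop) [DecidablePred p] (n : ℕ) : ℕ :=
  if p n then nth q (count p n) else nth (fun m => ¬ q m) (count (fun m => ¬ p m) n)

variable {p q : ℕ → Prop}

theorem nthMatch_iff [DecidablePred p] (hq : (Set.ofPred q).Infinite)
    (hq' : (Set.ofPred fun m => ¬ q m).Infinite) (n : ℕ) : q (nthMatch p q n) ↔ p n := by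
  unfold nthMatch
  split_ifs with h
  · exact iff_of_true (nth_mem_of_infinite hq _) h
  · exact iff_of_false (nth_mem_of_infinite hq' _) h

theorem nthMatch_nthMatch [DecidablePred p] [DecidablePred q] (hq : (Set.ofPred q).Infinite)
    (hq' : (Set.ofPred fun m => ¬ q m).Infinite) (n : ℕ) :
    nthMatch q p (nthMatch p q n) = n := by
  have hiff := nthMatch_iff (p := p) hq hq' n
  unfold nthMatch at hiff ⊢
  split_ifs at hiff ⊢ with h h' <;> simp_all [count_nth_of_infinite, nth_count]

theorem bijective_nthMatch [DecidablePred p] [DecidablePred q] (hp : (Set.ofPred p).Infinite)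
    (hp' : (Set.ofPred fun m => ¬ p m).Infinite) (hq : (Set.ofPred q).Infinite)
    (hq' : (Set.ofPred fun m => ¬ q m).Infinite) : Function.Bijective (nthMatch p q) :=
  Function.bijective_iff_has_inverse.2
    ⟨nthMatch q p, nthMatch_nthMatch hq hq', nthMatch_nthMatch hp hp'⟩

theorem computable_nthMatch [DecidablePred p] [DecidablePred q] (hp : ComputablePred p)
    (hq : ComputablePred q) (hqi : (Set.ofPred q).Infinite)
    (hqi' : (Set.ofPred fun m => ¬ q m).Infinite) : Computable (nthMatch p q) :=
  (Computable.cond hp.decide ((computable_nth hq hqi).comp (computable_count hp))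
    ((computable_nth hq.not hqi').comp (computable_count hp.not))).of_eq fun n => by
      by_cases h : p n <;> simp [nthMatch, h]

end Nat

theorem StrictMono.computablePred_mem_range {c : ℕ → ℕ} (hc : Computable c)
    (hmono : StrictMono c) : ComputablePred (· ∈ Set.range c) := by
  have hex : ∀ n, ∃ k, n ≤ c k := fun n => ⟨n, hmono.le_apply⟩
  have hdec : ComputablePred fun x : ℕ × ℕ => x.1 ≤ c x.2 :=
    Computable.computablePred <|
      Primrec.nat_le.decide.to_comp.comp Computable.fst (hc.comp Computable.snd)
  have hfind := Computable.find hdec hex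
  refine Computable.computablePred <|
    (Primrec.eq.decide.to_comp.comp (hc.comp hfind) Computable.id).of_eq fun n => ?_
  refine decide_eq_decide.2 ⟨fun h => ⟨_, h⟩, ?_⟩
  rintro ⟨k, rfl⟩
  exact le_antisymm (hmono.monotone (Nat.find_min' _ le_rfl)) (Nat.find_spec (hex (c k)))

section Gapped

variable {c : ℕ → ℕ}

theorem strictMono_of_add_one_lt (h : ∀ k, c k + 1 < c (k + 1)) : StrictMono c :=
  strictMono_nat_of_lt_succ fun k => (Nat.lt_succ_self _).trans (h k)

theorem infinite_compl_range_of_add_one_lt (h : ∀ k, c k + 1 < c (k + 1)) :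
    (Set.range c)ᶜ.Infinite := by
  have hmono := strictMono_of_add_one_lt h
  refine Set.infinite_of_injective_forall_mem (f := fun k => c k + 1)
    (fun a b hab => hmono.injective (by simpa using hab)) ?_
  rintro k ⟨j, hj⟩
  have hkj : k < j := hmono.lt_iff_lt.1 (by omega)
  have hjk : j < k + 1 := hmono.lt_iff_lt.1 (by linarith [h k])
  omega

end Gapped

theorem CE.exists_primrec_stage {B : Set ℕ} (hB : CE B) :
    ∃ R : ℕ → ℕ → Bool, Primrec₂ R ∧ ∀ n, n ∈ B ↔ ∃ s, R s n = true := by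
  obtain ⟨f, hf, hdom⟩ := hB
  obtain ⟨code, rfl⟩ := Nat.Partrec.Code.exists_code.1 (Partrec.nat_iff.1 hf)
  refine ⟨fun s n => (code.evaln s n).isSome, ?_, fun n => ?_⟩
  · exact Primrec.option_isSome.comp <| Nat.Partrec.Code.primrec_evaln.comp <|
      (Primrec.fst.pair (Primrec.const code)).pair Primrec.snd
  · simp only [hdom, Part.dom_iff_mem, Nat.Partrec.Code.evaln_complete, Option.mem_def,
      Option.isSome_iff_exists]
    exact exists_comm

theorem CE.exists_computable_gt {B : Set ℕ} (hB : CE B) (hinf : B.Infinite) :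
    ∃ F : ℕ → ℕ, Computable F ∧ ∀ v, v < F v ∧ F v ∈ B := by
  obtain ⟨R, hR, hB⟩ := hB.exists_primrec_stage
  have hex : ∀ v, ∃ m : ℕ, R m.unpair.1 m.unpair.2 = true ∧ v < m.unpair.2 := fun v => by
    obtain ⟨b, hb, hvb⟩ := hinf.exists_gt v
    obtain ⟨s, hs⟩ := (hB b).1 hb
    exact ⟨Nat.pair s b, by simpa using ⟨hs, hvb⟩⟩
  have hdec : ComputablePred fun x : ℕ × ℕ =>
      R x.2.unpair.1 x.2.unpair.2 = true ∧ x.1 < x.2.unpair.2 :=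
    PrimrecPred.computablePred <| PrimrecPred.and
      (Primrec.eq.comp (hR.comp (Primrec.fst.comp (Primrec.unpair.comp Primrec.snd))
        (Primrec.snd.comp (Primrec.unpair.comp Primrec.snd))) (Primrec.const true))
      (Primrec.nat_lt.comp Primrec.fst (Primrec.snd.comp (Primrec.unpair.comp Primrec.snd)))
  refine ⟨fun v => (Nat.find (hex v)).unpair.2,
    Computable.snd.comp (Computable.unpair.comp (Computable.find hdec hex)), fun v => ?_⟩
  obtain ⟨hs, hv⟩ := Nat.find_spec (hex v)
  exact ⟨hv, (hB _).2 ⟨_, hs⟩⟩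

theorem CE.exists_computable_gapped {B : Set ℕ} (hB : CE B) (hinf : B.Infinite) :
    ∃ c : ℕ → ℕ, Computable c ∧ (∀ k, c k + 1 < c (k + 1)) ∧ ∀ k, c k ∈ B := by
  obtain ⟨F, hF, hFB⟩ := hB.exists_computable_gt hinf
  refine ⟨fun k => Nat.rec (F 0) (fun _ x => F (x + 1)) k,
    Computable.nat_rec Computable.id (Computable.const (F 0))
      (hF.comp (Computable.succ.comp (Computable.snd.comp Computable.snd))).to₂,
    fun k => (hFB _).1, ?_⟩
  rintro (_ | k)
  exacts [(hFB 0).2, (hFB _).2]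

theorem partialDensity_nonneg (S : Set ℕ) (n : ℕ) : 0 ≤ partialDensity S n := by
  unfold partialDensity; positivity

theorem partialDensity_mono {S T : Set ℕ} (hST : S ⊆ T) (n : ℕ) :
    partialDensity S n ≤ partialDensity T n := by
  unfold partialDensity
  gcongr

theorem HasDensity.mono_zero {S T : Set ℕ} (hT : HasDensity T 0) (hST : S ⊆ T) :
    HasDensity S 0 :=
  tendsto_of_tendsto_of_tendsto_of_le_of_le tendsto_const_nhds hT
    (partialDensity_nonneg S) (partialDensity_mono hST)

theorem partialDensity_range_sq_le (n : ℕ) :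
    partialDensity (Set.range fun k => (k + 1) * (k + 1)) n ≤ 1 / √(n : ℝ) := by
  have hcard : ((Finset.range n).filter (· ∈ Set.range fun k => (k + 1) * (k + 1))).card
      ≤ Nat.sqrt n := by
    refine (Finset.card_le_card fun m hm => ?_).trans
      ((Finset.card_image_le (s := Finset.range (Nat.sqrt n))
        (f := fun k => (k + 1) * (k + 1))).trans (Finset.card_range _).le)
    simp only [Finset.mem_filter, Finset.mem_range, Set.mem_range] at hm
    obtain ⟨hmn, k, rfl⟩ := hm
    exact Finset.mem_image_of_mem _ (Finset.mem_range.2 (Nat.le_sqrt.2 hmn.le))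
  calc partialDensity _ n ≤ √(n : ℝ) / n := by
        unfold partialDensity
        gcongr
        exact (Nat.cast_le.2 hcard).trans Real.nat_sqrt_le_real_sqrt
    _ = 1 / √(n : ℝ) := Real.sqrt_div_self'

theorem hasDensity_range_sq : HasDensity (Set.range fun k => (k + 1) * (k + 1)) 0 := by
  have hlim : Tendsto (fun n : ℕ => 1 / √(n : ℝ)) atTop (nhds 0) := by
    simpa only [one_div, Function.comp_def] using
      tendsto_inv_atTop_zero.comp (Real.tendsto_sqrt_atTop.comp tendsto_natCast_atTop_atTop)
  exact tendsto_of_tendsto_of_tendsto_of_le_of_le tendsto_const_nhds hlim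
    (partialDensity_nonneg _) partialDensity_range_sq_le

theorem coce_density_zero (A : Set ℕ) (hA : CE Aᶜ) (hcoinf : Aᶜ.Infinite) :
    ∃ π : ℕ → ℕ, ComputablePerm π ∧ HasDensity (π '' A) 0 := by
  obtain ⟨c, hc, hc_gap, hcA⟩ := hA.exists_computable_gapped hcoinf
  set sq : ℕ → ℕ := fun k => (k + 1) * (k + 1)
  have hsq : Computable sq := (Primrec.nat_mul.comp Primrec.succ Primrec.succ).to_comp
  have hsq_gap : ∀ k, sq k + 1 < sq (k + 1) := fun k => by simp only [sq]; nlinarith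
  have hc_mono := strictMono_of_add_one_lt hc_gap
  have hsq_mono := strictMono_of_add_one_lt hsq_gap
  let p : ℕ → Prop := (· ∈ Set.range c)
  let q : ℕ → Prop := (· ∉ Set.range sq)
  have hp : (Set.ofPred p).Infinite := Set.infinite_range_of_injective hc_mono.injective
  have hp' : (Set.ofPred fun n => ¬ p n).Infinite := infinite_compl_range_of_add_one_lt hc_gap
  have hq : (Set.ofPred q).Infinite := infinite_compl_range_of_add_one_lt hsq_gap
  have hq' : (Set.ofPred fun m => ¬ q m).Infinite := by
    simpa only [q, not_not, Set.ofPred_mem_eq] using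
      Set.infinite_range_of_injective hsq_mono.injective
  refine ⟨Nat.nthMatch p q, ⟨Nat.bijective_nthMatch hp hp' hq hq',
    Nat.computable_nthMatch (hc_mono.computablePred_mem_range hc)
      (hsq_mono.computablePred_mem_range hsq).not hq hq'⟩, hasDensity_range_sq.mono_zero ?_⟩
  rintro _ ⟨n, hn, rfl⟩
  by_contra h
  obtain ⟨k, rfl⟩ := (Nat.nthMatch_iff hq hq' n).1 h
  exact hcA k hn
end

section
/- Every r-cohesive set has intrinsic density 0; that is, if C ⊆ ℕ is r-cohesive, then for every computable permutation π : ℕ → ℕ, the image π(C) has asymptotic density 0. -/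
open Filter

open scoped Classical

/-- An infinite set `C` is r-cohesive if no computable set splits it into two
infinite pieces. -/
def RCohesive (C : Set ℕ) : Prop :=
  C.Infinite ∧ ¬∃ R : Set ℕ, ComputablePred (fun n => n ∈ R) ∧
    (R ∩ C).Infinite ∧ (Rᶜ ∩ C).Infinite

/-!
Fix a computable permutation `π` and `k > 0`. The computable sets `{x | π x % k = j}`, `j < k`,
partition `ℕ`, so by r-cohesiveness all but finitely many elements of `C` lie in a single one of
them. Hence `π '' C` lies, up to a finite set, in one residue class mod `k`, and its upper density
is at most `1 / k`. As `k` is arbitrary, the density is `0`.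
-/

lemma card_filter_mod_eq_le (k j n : ℕ) :
    ((Finset.range n).filter (fun m => m % k = j)).card ≤ n / k + 1 := by
  simpa using Finset.card_le_card_of_injOn (t := Finset.range (n / k + 1)) (fun m => m / k)
    (fun m hm => by
      simp only [Finset.coe_filter, Finset.mem_range, Set.mem_ofPred_eq, Finset.mem_coe] at hm ⊢
      exact Nat.lt_succ_of_le (Nat.div_le_div_right hm.1.le))
    (fun a ha b hb hab => by
      simp only [Finset.coe_filter, Finset.mem_range, Set.mem_ofPred_eq] at ha hb
      rw [← Nat.div_add_mod a k, ← Nat.div_add_mod b k, ha.2, hb.2, show a / k = b / k from hab])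

lemma hasDensity_zero_of_forall_card_le {S : Set ℕ}
    (h : ∀ ε > 0, ∃ c : ℝ, ∀ n : ℕ,
      (((Finset.range n).filter (fun m => m ∈ S)).card : ℝ) ≤ ε * n + c) :
    HasDensity S 0 := by
  refine tendsto_order.2 ⟨fun a ha => Eventually.of_forall fun n => ha.trans_le ?_,
    fun a ha => ?_⟩
  · exact div_nonneg (Nat.cast_nonneg _) (Nat.cast_nonneg _)
  obtain ⟨c, hc⟩ := h (a / 2) (half_pos ha)
  have hsmall : ∀ᶠ n : ℕ in atTop, c / n < a / 2 :=
    (tendsto_order.1 (tendsto_const_div_atTop_nhds_zero_nat c)).2 _ (half_pos ha)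
  filter_upwards [hsmall, eventually_gt_atTop 0] with n hn hpos
  have hpos' : (0 : ℝ) < n := Nat.cast_pos.2 hpos
  calc partialDensity S n ≤ (a / 2 * n + c) / n := div_le_div_of_nonneg_right (hc n) hpos'.le
    _ = a / 2 + c / n := by field_simp
    _ < a := by linarith

lemma hasDensity_zero_of_forall_finite_diff_residue {S : Set ℕ}
    (h : ∀ k > 0, ∃ j, (S \ {m | m % k = j}).Finite) : HasDensity S 0 := by
  refine hasDensity_zero_of_forall_card_le fun ε hε => ?_
  obtain ⟨k, hk⟩ := exists_nat_gt ε⁻¹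
  have hk0 : 0 < k := Nat.cast_pos.1 ((inv_pos.2 hε).trans hk)
  obtain ⟨j, hj⟩ := h k hk0
  refine ⟨1 + hj.toFinset.card, fun n => ?_⟩
  have hcover : (Finset.range n).filter (fun m => m ∈ S) ⊆
      (Finset.range n).filter (fun m => m % k = j) ∪ hj.toFinset := by
    intro m
    simp only [Finset.mem_filter, Finset.mem_union, Set.Finite.mem_toFinset, Set.mem_sdiff,
      Set.mem_ofPred_eq]
    tauto
  have hcount : ((Finset.range n).filter (fun m => m ∈ S)).card ≤ n / k + 1 + hj.toFinset.card :=
    (Finset.card_le_card hcover).trans ((Finset.card_union_le _ _).trans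
      (Nat.add_le_add_right (card_filter_mod_eq_le k j n) _))
  have hdiv : ((n / k : ℕ) : ℝ) ≤ ε * n :=
    calc ((n / k : ℕ) : ℝ) ≤ n / k := Nat.cast_div_le
      _ = (k : ℝ)⁻¹ * n := by ring
      _ ≤ ε * n := by gcongr; exact (inv_lt_of_inv_lt₀ hε hk).le
  calc (((Finset.range n).filter (fun m => m ∈ S)).card : ℝ)
      ≤ ((n / k + 1 + hj.toFinset.card : ℕ) : ℝ) := Nat.cast_le.2 hcount
    _ = ((n / k : ℕ) : ℝ) + (1 + hj.toFinset.card) := by push_cast; ring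
    _ ≤ ε * n + (1 + hj.toFinset.card) := by gcongr

lemma computablePred_mod_eq {f : ℕ → ℕ} (hf : Computable f) (k j : ℕ) :
    ComputablePred (fun n => f n % k = j) :=
  ComputablePred.computable_iff.2 ⟨fun n => decide (f n % k = j),
    ((Primrec.eq.comp (Primrec.nat_mod.comp Primrec.id (Primrec.const k))
      (Primrec.const j)).decide.to_comp.comp hf), by simp⟩

lemma RCohesive.exists_finite_diff_residue_preimage {C : Set ℕ} (hC : RCohesive C)
    {f : ℕ → ℕ} (hf : Computable f) {k : ℕ} (hk : 0 < k) :
    ∃ j, (C \ {x | f x % k = j}).Finite := by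
  have hcover : C ⊆ ⋃ j ∈ Finset.range k, {x | f x % k = j} ∩ C := fun x hx =>
    Set.mem_biUnion (Finset.mem_coe.2 (Finset.mem_range.2 (Nat.mod_lt _ hk))) ⟨rfl, hx⟩
  obtain ⟨j, -, hj⟩ : ∃ j ∈ Finset.range k, ({x | f x % k = j} ∩ C).Infinite := by
    by_contra! hfin
    exact hC.1 ((Set.Finite.biUnion (Finset.range k).finite_toSet hfin).subset hcover)
  refine ⟨j, Set.not_infinite.1 fun hinf => hC.2 ⟨{x | f x % k = j}, computablePred_mod_eq hf k j,
    hj, ?_⟩⟩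
  rwa [Set.inter_comm, ← Set.sdiff_eq]

theorem rCohesive_intrinsicDensity_zero (C : Set ℕ) (hC : RCohesive C) :
    ∀ π : ℕ → ℕ, ComputablePerm π → HasDensity (π '' C) 0 := by
  intro π hπ
  refine hasDensity_zero_of_forall_finite_diff_residue fun k hk => ?_
  obtain ⟨j, hj⟩ := hC.exists_finite_diff_residue_preimage hπ.2 hk
  refine ⟨j, (hj.image π).subset ?_⟩
  rintro _ ⟨⟨x, hx, rfl⟩, hxj⟩
  exact ⟨x, ⟨hx, hxj⟩, rfl⟩
end

section
/- Every dense immune set has intrinsic density 0; that is, if S ⊆ ℕ is infinite and its principal function dominates every computable function, then for every computable permutation π : ℕ → ℕ, the image π(S) has asymptotic density 0. -/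
open Filter

open scoped Classical

/-!
If `π` is a computable permutation with inverse `σ`, then every element of `π(S)` below `n` is
the image of an element of `S` below the computable bound `b n = max_{j < n} σ j + 1`, so
`|π(S) ∩ [0,n)| ≤ |S ∩ [0, b n)|`. For fixed `k`, dense immunity applied to `m ↦ b (k m)` gives
`|S ∩ [0, b (k m))| < m` for large `m`; taking `m = ⌊n / k⌋ + 1` yields
`|π(S) ∩ [0,n)| ≤ n / k` for large `n`, so `π(S)` has density `0`.
-/

noncomputable def countBelow (S : Set ℕ) (n : ℕ) : ℕ :=
  ((Finset.range n).filter (fun m => m ∈ S)).card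

theorem countBelow_mono (S : Set ℕ) : Monotone (countBelow S) := fun _ _ hab =>
  Finset.card_le_card (Finset.filter_subset_filter _ (Finset.range_subset_range.2 hab))

theorem countBelow_lt_of_lt_principalFn {S : Set ℕ} {m x : ℕ} (h : x < principalFn S m) :
    countBelow S x < m := by
  by_contra! hle
  have : principalFn S m ≤ x := Nat.sInf_le hle
  omega

theorem countBelow_image_le (π : ℕ → ℕ) (S : Set ℕ) {n b : ℕ}
    (hb : ∀ x, π x < n → x < b) : countBelow (π '' S) n ≤ countBelow S b := by
  refine le_trans (Finset.card_le_card (t := ((Finset.range b).filter (· ∈ S)).image π) ?_)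
    Finset.card_image_le
  intro y hy
  simp only [Finset.mem_filter, Finset.mem_range, Set.mem_image] at hy
  obtain ⟨hyn, x, hxS, rfl⟩ := hy
  exact Finset.mem_image_of_mem π (by simpa [hxS] using hb x hyn)

theorem hasDensity_zero_of_eventually_mul_countBelow_le {T : Set ℕ}
    (h : ∀ k > 0, ∀ᶠ n in atTop, k * countBelow T n ≤ n) : HasDensity T 0 := by
  rw [HasDensity, Metric.tendsto_atTop]
  intro ε hε
  obtain ⟨k, hk⟩ := exists_nat_one_div_lt hε
  obtain ⟨N, hN⟩ := eventually_atTop.1 (h (k + 1) k.succ_pos)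
  refine ⟨N + 1, fun n hn => ?_⟩
  have hn0 : (0 : ℝ) < n := by exact_mod_cast Nat.zero_lt_of_lt hn
  have hcount : ((k + 1 : ℕ) : ℝ) * countBelow T n ≤ n := by exact_mod_cast hN n (by omega)
  have hle : partialDensity T n ≤ 1 / (k + 1) := by
    rw [partialDensity, ← countBelow, div_le_div_iff₀ hn0 (by positivity)]
    push_cast at hcount
    linarith
  rw [Real.dist_0_eq_abs, abs_of_nonneg (by unfold partialDensity; positivity)]
  exact hle.trans_lt hk

def DenseImmune (S : Set ℕ) : Prop :=
  ∀ f : ℕ → ℕ, Computable f → ∀ᶠ n in atTop, f n < principalFn S n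

theorem DenseImmune.eventually_countBelow_lt {S : Set ℕ} (hS : DenseImmune S)
    {f : ℕ → ℕ} (hf : Computable f) : ∀ᶠ m in atTop, countBelow S (f m) < m :=
  (hS f hf).mono fun _ => countBelow_lt_of_lt_principalFn

theorem DenseImmune.hasDensity_zero_of_countBelow_le {S T : Set ℕ} (hS : DenseImmune S)
    {b : ℕ → ℕ} (hb : Computable b) (hT : ∀ n, countBelow T n ≤ countBelow S (b n)) :
    HasDensity T 0 := by
  refine hasDensity_zero_of_eventually_mul_countBelow_le fun k hk => ?_
  have hbk : Computable fun m => b (k * m) :=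
    hb.comp (Primrec.nat_mul.comp (Primrec.const k) Primrec.id).to_comp
  obtain ⟨M, hM⟩ := eventually_atTop.1 (hS.eventually_countBelow_lt hbk)
  refine eventually_atTop.2 ⟨k * M, fun n hn => ?_⟩
  have hMm : M ≤ n / k + 1 :=
    ((Nat.le_div_iff_mul_le hk).2 (by rwa [Nat.mul_comm])).trans (Nat.le_succ _)
  have hnk : n ≤ k * (n / k + 1) := (Nat.lt_mul_div_succ n hk).le
  have hcount := calc countBelow T n ≤ countBelow T (k * (n / k + 1)) := countBelow_mono T hnk
    _ ≤ countBelow S (b (k * (n / k + 1))) := hT _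
    _ < n / k + 1 := hM _ hMm
  calc k * countBelow T n ≤ k * (n / k) := Nat.mul_le_mul_left k (Nat.lt_succ_iff.1 hcount)
    _ ≤ n := Nat.mul_div_le n k

theorem Computable.exists_rightInverse {α : Type*} [Primcodable α] [DecidableEq α]
    {π : ℕ → α} (hπ : Computable π) (hsurj : Function.Surjective π) :
    ∃ σ : α → ℕ, Computable σ ∧ Function.RightInverse σ π := by
  have hpred : ComputablePred fun p : α × ℕ => π p.2 = p.1 :=
    ⟨inferInstance, Primrec.eq.decide.to_comp.comp (hπ.comp Computable.snd) Computable.fst⟩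
  exact ⟨_, Computable.find hpred hsurj, fun a => Nat.find_spec (hsurj a)⟩

theorem Computable.finset_range_sup {σ : ℕ → ℕ} (hσ : Computable σ) :
    Computable fun n => (Finset.range n).sup σ := by
  have hstep : Computable₂ fun (_ : ℕ) (p : ℕ × ℕ) => max (σ p.1) p.2 :=
    Primrec.nat_max.to_comp.comp (hσ.comp (Computable.fst.comp Computable.snd))
      (Computable.snd.comp Computable.snd)
  refine (Computable.nat_rec Computable.id (Computable.const 0) hstep).of_eq fun n => ?_
  induction n with
  | zero => rfl
  | succ n ih => simp only [Finset.range_add_one, Finset.sup_insert, ← ih]; rfl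

theorem denseImmune_intrinsicDensity_zero_general (S : Set ℕ)
    (hdom : ∀ f : ℕ → ℕ, Computable f → ∀ᶠ n in atTop, f n < principalFn S n) :
    ∀ π : ℕ → ℕ, ComputablePerm π → HasDensity (π '' S) 0 := by
  rintro π ⟨hbij, hπ⟩
  obtain ⟨σ, hσ, hσπ⟩ := hπ.exists_rightInverse hbij.2
  have hσ' : Function.LeftInverse σ π := hσπ.leftInverse_of_injective hbij.1
  refine DenseImmune.hasDensity_zero_of_countBelow_le hdom
    (Primrec.succ.to_comp.comp hσ.finset_range_sup) fun n => countBelow_image_le π S ?_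
  intro x hx
  rw [Nat.lt_succ_iff, ← hσ' x]
  exact Finset.le_sup (Finset.mem_range.2 hx)

theorem denseImmune_intrinsicDensity_zero (S : Set ℕ) (hinf : S.Infinite)
    (hdom : ∀ f : ℕ → ℕ, Computable f → ∀ᶠ n in atTop, f n < principalFn S n) :
    ∀ π : ℕ → ℕ, ComputablePerm π → HasDensity (π '' S) 0 :=
  denseImmune_intrinsicDensity_zero_general S hdom
end

section
/- A set A ⊆ ℕ has intrinsic density d if and only if for every total computable injection p : ℕ → ℕ, the set p⁻¹(A) = {n : p(n) ∈ A} has asymptotic density d. -/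
open Filter

open scoped Classical

/-!
If `π` is a computable permutation, then `π '' A = π⁻¹ ⁻¹' A` and `π⁻¹` is a computable injection.
Conversely, let `p` be a computable injection. Inserting the value `k` at position `k²` of the
sequence `p` makes it surjective while changing only `O(√N)` of its first `N` values. Listing `ℕ`
in order of first appearance in this padded sequence gives a computable permutation `π` that maps
the first `N` padded values onto an initial segment of `ℕ`. So the density of `π '' A` along these
initial segments differs from `ρ_N(p⁻¹' A)` by `O(1/√N)`.
-/

open Finset Topology

section FirstOccurrence

variable {α : Type*} [DecidableEq α] {e : ℕ → α} (he : Function.Surjective e)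

def firstIndex (x : α) : ℕ := Nat.find (he x)

def occurrenceRank (x : α) : ℕ := #((range (firstIndex he x)).image e)

theorem apply_firstIndex (x : α) : e (firstIndex he x) = x := Nat.find_spec (he x)

theorem firstIndex_injective : Function.Injective (firstIndex he) :=
  Function.LeftInverse.injective (apply_firstIndex he)

theorem firstIndex_lt_iff {x : α} {N : ℕ} : firstIndex he x < N ↔ x ∈ (range N).image e := by
  simp [firstIndex, Nat.find_lt_iff]

theorem occurrenceRank_lt_card {x : α} {N : ℕ} (h : firstIndex he x < N) :
    occurrenceRank he x < #((range N).image e) := by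
  refine card_lt_card (Finset.ssubset_iff_subset_ne.mpr
    ⟨image_subset_image (range_subset_range.mpr h.le), fun heq => ?_⟩)
  have hx := (firstIndex_lt_iff he).mp h
  rw [← heq, ← firstIndex_lt_iff he] at hx
  exact lt_irrefl _ hx

theorem occurrenceRank_injective : Function.Injective (occurrenceRank he) := by
  intro x y hxy
  by_contra hne
  rcases lt_or_gt_of_ne ((firstIndex_injective he).ne hne) with h | h
  · exact (occurrenceRank_lt_card he h).ne hxy
  · exact (occurrenceRank_lt_card he h).ne hxy.symm

theorem image_occurrenceRank (N : ℕ) :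
    ((range N).image e).image (occurrenceRank he) = range #((range N).image e) := by
  refine eq_of_subset_of_card_le (fun y hy => ?_) ?_
  · obtain ⟨x, hx, rfl⟩ := mem_image.mp hy
    exact mem_range.mpr (occurrenceRank_lt_card he ((firstIndex_lt_iff he).mpr hx))
  · rw [card_range, card_image_of_injective _ (occurrenceRank_injective he)]

theorem occurrenceRank_surjective [Infinite α] : Function.Surjective (occurrenceRank he) := by
  intro n
  obtain ⟨s, hs⟩ := Infinite.exists_subset_card_eq α (n + 1)
  set N := s.sup (firstIndex he) + 1
  have hsub : s ⊆ (range N).image e := fun x hx =>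
    (firstIndex_lt_iff he).mp (Nat.lt_succ_of_le (le_sup hx))
  have hn : n ∈ range #((range N).image e) :=
    mem_range.mpr (hs.symm.trans_le (card_le_card hsub))
  rw [← image_occurrenceRank he] at hn
  obtain ⟨x, -, hx⟩ := mem_image.mp hn
  exact ⟨x, hx⟩

theorem occurrenceRank_bijective [Infinite α] : Function.Bijective (occurrenceRank he) :=
  ⟨occurrenceRank_injective he, occurrenceRank_surjective he⟩

theorem partialDensity_image_occurrenceRank (A : Set α) (N : ℕ) :
    partialDensity (occurrenceRank he '' A) #((range N).image e) =
      #(((range N).image e).filter (· ∈ A)) / #((range N).image e) := by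
  have hinj := occurrenceRank_injective he
  rw [partialDensity, ← image_occurrenceRank he, filter_image, card_image_of_injective _ hinj]
  simp only [hinj.mem_set_image]

end FirstOccurrence

theorem image_eq_preimage_firstIndex {α : Type*} [DecidableEq α] {e : ℕ → α}
    (he : Function.Bijective e) (A : Set ℕ) : e '' A = firstIndex he.2 ⁻¹' A :=
  congrFun (Set.image_eq_preimage_of_inverse (fun x => he.1 (apply_firstIndex he.2 (e x)))
    (apply_firstIndex he.2)) A

section Computability

variable {α : Type*} [DecidableEq α] [Primcodable α] {e : ℕ → α}

theorem computable_firstIndex {he : Function.Surjective e} (hc : Computable e) :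
    Computable (firstIndex he) :=
  Computable.find (P := fun x n => e n = x) (Computable.computablePred
    (Primrec.eq.decide.to_comp.comp (hc.comp Computable.snd) Computable.fst)) he

theorem computable_card_image_range (he : Function.Surjective e) (hc : Computable e) :
    Computable fun n => #((range n).image e) := by
  -- `e i` is a new value exactly when `i` is its first index.
  have step : Computable₂ fun (i c : ℕ) => bif decide (firstIndex he (e i) < i) then c else c + 1 :=
    Computable.cond
      (Primrec.nat_lt.decide.to_comp.comp ((computable_firstIndex hc).comp (hc.comp Computable.fst))
        Computable.fst)
      Computable.snd (Computable.succ.comp Computable.snd)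
  refine (Computable.nat_rec Computable.id (Computable.const 0) (step.comp
    (Computable.fst.comp Computable.snd) (Computable.snd.comp Computable.snd)).to₂).of_eq
    fun n => ?_
  induction n with
  | zero => rfl
  | succ n ih =>
    have hmem : e n ∈ (range n).image e ↔ firstIndex he (e n) < n := (firstIndex_lt_iff he).symm
    rw [range_add_one, image_insert, card_insert_eq_ite, ← ih]
    by_cases h : firstIndex he (e n) < n <;> simp [h, hmem]

theorem computable_occurrenceRank {he : Function.Surjective e} (hc : Computable e) :
    Computable (occurrenceRank he) :=
  (computable_card_image_range he hc).comp (computable_firstIndex hc)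

end Computability

def squarePadded (p : ℕ → ℕ) (n : ℕ) : ℕ :=
  if Nat.sqrt n * Nat.sqrt n = n then Nat.sqrt n else p n

theorem computable_squarePadded {p : ℕ → ℕ} (hp : Computable p) : Computable (squarePadded p) :=
  (Computable.cond
    (Primrec.eq.decide.comp (Primrec.nat_mul.comp Primrec.nat_sqrt Primrec.nat_sqrt)
      Primrec.id).to_comp
    Primrec.nat_sqrt.to_comp hp).of_eq fun n => by simp [squarePadded, Bool.cond_decide]

section SquarePadding

variable (p : ℕ → ℕ)

theorem squarePadded_surjective : Function.Surjective (squarePadded p) :=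
  fun k => ⟨k * k, by simp [squarePadded, Nat.sqrt_eq]⟩

theorem image_squarePadded_subset (N : ℕ) :
    (range N).image (squarePadded p) ⊆ (range N).image p ∪ range (Nat.sqrt N + 1) := by
  intro x hx
  obtain ⟨n, hn, rfl⟩ := mem_image.mp hx
  have hsqrt : Nat.sqrt n < Nat.sqrt N + 1 :=
    Nat.lt_succ_of_le (Nat.sqrt_le_sqrt (mem_range.mp hn).le)
  unfold squarePadded
  split_ifs
  · exact mem_union_right _ (mem_range.mpr hsqrt)
  · exact mem_union_left _ (mem_image_of_mem p hn)

theorem image_subset_image_squarePadded (N : ℕ) :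
    (range N).image p ⊆
      (range N).image (squarePadded p) ∪ (range (Nat.sqrt N + 1)).image (fun k => p (k * k)) := by
  intro x hx
  obtain ⟨n, hn, rfl⟩ := mem_image.mp hx
  have hsqrt : Nat.sqrt n < Nat.sqrt N + 1 :=
    Nat.lt_succ_of_le (Nat.sqrt_le_sqrt (mem_range.mp hn).le)
  by_cases hsq : Nat.sqrt n * Nat.sqrt n = n
  · exact mem_union_right _ (mem_image.mpr ⟨Nat.sqrt n, mem_range.mpr hsqrt, by rw [hsq]⟩)
  · exact mem_union_left _ (mem_image.mpr ⟨n, hn, if_neg hsq⟩)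

theorem range_sqrt_subset_image_squarePadded (N : ℕ) :
    range (Nat.sqrt N) ⊆ (range N).image (squarePadded p) := by
  intro k hk
  have hkN : (k + 1) * (k + 1) ≤ N := Nat.le_sqrt.mp (mem_range.mp hk)
  refine mem_image.mpr ⟨k * k, mem_range.mpr (by nlinarith), ?_⟩
  simp [squarePadded, Nat.sqrt_eq]

end SquarePadding

theorem card_filter_le_card_filter_add_card {α : Type*} [DecidableEq α] {s t u : Finset α}
    (h : s ⊆ t ∪ u) (P : α → Prop) [DecidablePred P] :
    #(s.filter P) ≤ #(t.filter P) + #u := by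
  refine (card_le_card fun x hx => ?_).trans (card_union_le _ _)
  rw [mem_filter] at hx
  rcases mem_union.mp (h hx.1) with ht | hu
  · exact mem_union_left _ (mem_filter.mpr ⟨ht, hx.2⟩)
  · exact mem_union_right _ hu

theorem abs_card_filter_sub_card_filter_le {α : Type*} [DecidableEq α] {s t u v : Finset α}
    (hst : s ⊆ t ∪ u) (hts : t ⊆ s ∪ v) (P : α → Prop) [DecidablePred P] {E : ℕ}
    (hu : #u ≤ E) (hv : #v ≤ E) :
    |(#(s.filter P) : ℝ) - #(t.filter P)| ≤ E := by
  have h₁ := card_filter_le_card_filter_add_card hst P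
  have h₂ := card_filter_le_card_filter_add_card hts P
  rw [abs_sub_le_iff, sub_le_iff_le_add', sub_le_iff_le_add']
  constructor <;> norm_cast <;> omega

theorem tendsto_nat_sqrt_atTop : Tendsto Nat.sqrt atTop atTop :=
  tendsto_atTop_atTop.mpr fun b => ⟨b * b, fun _ hn => Nat.le_sqrt.mpr hn⟩

theorem tendsto_nat_sqrt_add_one_div_atTop :
    Tendsto (fun N : ℕ => ((Nat.sqrt N : ℝ) + 1) / N) atTop (𝓝 0) := by
  refine squeeze_zero' (Eventually.of_forall fun N => by positivity) ?_
    ((tendsto_const_div_atTop_nhds_zero_nat (2 : ℝ)).comp tendsto_nat_sqrt_atTop)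
  filter_upwards [eventually_ge_atTop 1] with N hN
  have hs : (1 : ℝ) ≤ Nat.sqrt N := by exact_mod_cast Nat.sqrt_pos.mpr hN
  have hsN : (Nat.sqrt N : ℝ) * Nat.sqrt N ≤ N := by exact_mod_cast Nat.sqrt_le N
  rw [Function.comp_apply, div_le_div_iff₀ (by positivity) (by positivity)]
  nlinarith

theorem tendsto_div_of_abs_le_nat_sqrt_add_one {x : ℕ → ℝ} (h : ∀ N, |x N| ≤ Nat.sqrt N + 1) :
    Tendsto (fun N => x N / N) atTop (𝓝 0) :=
  squeeze_zero_norm (fun N => by rw [norm_div, Real.norm_natCast]; gcongr; exact h N)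
    tendsto_nat_sqrt_add_one_div_atTop

theorem tendsto_div_of_sub_div_tendsto_zero {ι : Type*} {l : Filter ι} {a b M N : ι → ℝ} {d : ℝ}
    (h : Tendsto (fun i => a i / M i) l (𝓝 d))
    (hab : Tendsto (fun i => (a i - b i) / N i) l (𝓝 0))
    (hMN : Tendsto (fun i => (M i - N i) / N i) l (𝓝 0))
    (hM : ∀ᶠ i in l, M i ≠ 0) (hN : ∀ᶠ i in l, N i ≠ 0) :
    Tendsto (fun i => b i / N i) l (𝓝 d) := by
  have hlim := (h.mul ((tendsto_const_nhds (x := (1 : ℝ))).add hMN)).sub hab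
  rw [add_zero, mul_one, sub_zero] at hlim
  refine hlim.congr' ?_
  filter_upwards [hM, hN] with i hMi hNi
  field_simp
  ring

theorem partialDensity_preimage {p : ℕ → ℕ} (hp : Function.Injective p) (A : Set ℕ) (N : ℕ) :
    partialDensity (p ⁻¹' A) N = #(((range N).image p).filter (· ∈ A)) / N := by
  rw [partialDensity, filter_image, card_image_of_injective _ hp]
  rfl

theorem hasDensity_preimage_of_hasDensity_image_occurrenceRank {p : ℕ → ℕ}
    (hp : Function.Injective p) {A : Set ℕ} {d : ℝ}
    (h : HasDensity (occurrenceRank (squarePadded_surjective p) '' A) d) :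
    HasDensity (p ⁻¹' A) d := by
  set F : ℕ → Finset ℕ := fun N => (range N).image (squarePadded p)
  have hF : Tendsto (fun N => #(F N)) atTop atTop :=
    tendsto_atTop_mono (fun N => (card_range _).symm.le.trans
      (card_le_card (range_sqrt_subset_image_squarePadded p N))) tendsto_nat_sqrt_atTop
  have hclose : ∀ (P : ℕ → Prop) [DecidablePred P] (N : ℕ),
      |(#((F N).filter P) : ℝ) - #(((range N).image p).filter P)| ≤ Nat.sqrt N + 1 :=
    fun P _ N => by
      exact_mod_cast abs_card_filter_sub_card_filter_le (image_squarePadded_subset p N)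
        (image_subset_image_squarePadded p N) P (card_range _).le
        (card_image_le.trans (card_range _).le)
  have hsize : ∀ N, |(#(F N) : ℝ) - N| ≤ Nat.sqrt N + 1 := fun N => by
    simpa [card_image_of_injective _ hp] using hclose (fun _ => True) N
  have hrank : Tendsto (fun N => (#((F N).filter (· ∈ A)) : ℝ) / #(F N)) atTop (𝓝 d) :=
    (h.comp hF).congr fun N => partialDensity_image_occurrenceRank _ A N
  refine (tendsto_div_of_sub_div_tendsto_zero hrank
    (tendsto_div_of_abs_le_nat_sqrt_add_one (hclose (· ∈ A)))
    (tendsto_div_of_abs_le_nat_sqrt_add_one hsize)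
    (hF.eventually_ne_atTop 0 |>.mono fun _ => Nat.cast_ne_zero.mpr)
    (eventually_ne_atTop 0 |>.mono fun _ => Nat.cast_ne_zero.mpr)).congr
    fun N => (partialDensity_preimage hp A N).symm

theorem intrinsicDensity_iff_injection_sampling (A : Set ℕ) (d : ℝ) :
    (∀ π : ℕ → ℕ, ComputablePerm π → HasDensity (π '' A) d) ↔
      (∀ p : ℕ → ℕ, Function.Injective p → Computable p →
        HasDensity (p ⁻¹' A) d) := by
  constructor
  · intro hperm p hinj hp
    exact hasDensity_preimage_of_hasDensity_image_occurrenceRank hinj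
      (hperm _ ⟨occurrenceRank_bijective _, computable_occurrenceRank (computable_squarePadded hp)⟩)
  · rintro hsample π ⟨hbij, hπ⟩
    rw [image_eq_preimage_firstIndex hbij]
    exact hsample _ (firstIndex_injective hbij.2) (computable_firstIndex hπ)
end

section
/- Let S ⊆ ℕ be an index set, i.e., for all e, e' ∈ ℕ, if the partial computable functions with codes e and e' are equal then S(e) = S(e'). Then the following are equivalent: (i) π(S) is generic-case computable for every computable permutation π : ℕ → ℕ; (ii) S is computable; (iii) S = ∅ or S = ℕ. -/
open Filter

open scoped Classical

/-- The `e`-th partial computable function, via the standard numbering of codes. -/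
def phi (e : ℕ) : ℕ →. ℕ := (Denumerable.ofNat Nat.Partrec.Code e).eval

/-- `S` is an index set. -/
def IndexSet (S : Set ℕ) : Prop :=
  ∀ e e', phi e = phi e' → (e ∈ S ↔ e' ∈ S)

/-- `f` is a partial description of `A`: wherever `f` converges, it agrees with
the characteristic function of `A`. -/
def PartialDescription (f : ℕ →. Bool) (A : Set ℕ) : Prop :=
  ∀ n b, b ∈ f n → (b = true ↔ n ∈ A)

/-- `A` is generic-case computable: it has a partial computable partial
description whose domain has density 1. -/
def GenericCaseComputable (A : Set ℕ) : Prop :=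
  ∃ f : ℕ →. Bool, Partrec f ∧ PartialDescription f A ∧
    HasDensity {n | (f n).Dom} 1


/-!
If `S` is computable, so is every `π(S)` (its characteristic function composed with `π⁻¹`), hence
it is generic-case computable; and by Rice's theorem a computable index set is `∅` or `ℕ`.

Conversely, let `a ∈ S` and `b ∉ S`. By the recursion theorem there are indices `e k`, primitive
recursive and injective in `k`, such that `φ (e k)` waits for the `k.unpair.1`-th partial
computable Boolean function to converge on `e k` and then behaves like `φ b` if the answer is
`true` and like `φ a` if it is `false`. Hence if the `i`-th Boolean function is a partial
description of `S`, it diverges on the whole column `{e k | k.unpair.1 = i}`. A computable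
permutation `π` maps every column onto a set containing infinitely many intervals `[x, 2x)`: on
each block `[4ⁿ, 2·4ⁿ)` it is the inverse of `m ↦ e ⟨n.unpair.1, m⟩`, and it matches the
remaining positions with the remaining numbers in increasing order. If `f` were a generic
description of `π(S)`, then `f ∘ π` would describe `S`, so `f` would diverge on infinitely many
intervals `[x, 2x)`, and the domain of `f` would have density at most `1/2` at every `2x`.
-/

open Function
open Nat.Partrec (Code)
open Nat.Partrec.Code

theorem Primrec.nat_pow : Primrec₂ ((· ^ ·) : ℕ → ℕ → ℕ) :=
  Primrec₂.unpaired'.1 Nat.Primrec.pow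

theorem Nat.log_eq_findGreatest {b : ℕ} (hb : 1 < b) (n : ℕ) :
    Nat.log b n = Nat.findGreatest (fun k => b ^ k ≤ n) n := by
  refine (Nat.findGreatest_eq_iff.2 ⟨Nat.log_le_self b n, fun h => ?_, fun k hk _ => ?_⟩).symm
  · exact Nat.pow_log_le_self b fun h0 => h (by simp [h0])
  · exact not_le.2 (Nat.lt_pow_of_log_lt hb hk)

theorem Primrec.nat_log (b : ℕ) : Primrec (Nat.log b) := by
  rcases le_or_gt b 1 with hb | hb
  · exact (Primrec.const 0).of_eq fun n => (Nat.log_of_left_le_one hb n).symm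
  · refine (Primrec.nat_findGreatest Primrec.id ?_).of_eq fun n =>
      (Nat.log_eq_findGreatest hb n).symm
    exact Primrec.nat_le.comp (Primrec.nat_pow.comp (Primrec.const b) Primrec.snd) Primrec.fst

theorem primrecPred_mem_image_of_le {A : Set ℕ} {h : ℕ → ℕ} (hA : PrimrecPred (· ∈ A))
    (hh : Primrec h) (hle : ∀ m, m ≤ h m) : PrimrecPred (· ∈ h '' A) := by
  have hgraph : PrimrecRel fun m x => m ∈ A ∧ h m = x :=
    (hA.comp Primrec.fst).and (Primrec.eq.comp (hh.comp Primrec.fst) Primrec.snd)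
  refine (hgraph.exists_lt.comp Primrec.succ Primrec.id).of_eq fun x => ?_
  exact ⟨fun ⟨m, _, hm, hmx⟩ => ⟨m, hm, hmx⟩,
    fun ⟨m, hm, hmx⟩ => ⟨m, Nat.lt_succ_of_le (hmx ▸ hle m), hm, hmx⟩⟩

theorem ComputablePred.comp {α β : Type*} [Primcodable α] [Primcodable β] {p : β → Prop}
    {f : α → β} (hp : ComputablePred p) (hf : Computable f) : ComputablePred fun a => p (f a) :=
  let ⟨_, hp⟩ := hp
  ⟨fun _ => inferInstance, hp.comp hf⟩

theorem ComputablePred.computable_count {p : ℕ → Prop} [DecidablePred p]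
    (hp : ComputablePred p) : Computable (Nat.count p) := by
  have hstep : Computable₂ fun (_ : ℕ) (q : ℕ × ℕ) => q.2 + if p q.1 then 1 else 0 :=
    (Primrec.nat_add.to_comp.comp (Computable.snd.comp Computable.snd)
      ((ComputablePred.ite (Computable.const 1) (Computable.const 0) hp).comp
        (Computable.fst.comp Computable.snd))).to₂
  refine (Computable.nat_rec Computable.id (Computable.const 0) hstep).of_eq fun n => ?_
  induction n with
  | zero => simp
  | succ n ih => simp only [Nat.count_succ, ← ih]; rfl

theorem ComputablePred.computable_nth {p : ℕ → Prop} (hp : ComputablePred p)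
    (hinf : {n | p n}.Infinite) : Computable (Nat.nth p) := by
  have hlt (j x : ℕ) : j < Nat.count p (x + 1) ↔ Nat.nth p j ≤ x :=
    (Nat.lt_nth_iff_count_lt hinf).trans Nat.lt_succ_iff
  have hP : ComputablePred fun q : ℕ × ℕ => q.1 < Nat.count p (q.2 + 1) :=
    Computable.computablePred (Primrec.nat_lt.decide.to_comp.comp Computable.fst
      (hp.computable_count.comp (Computable.succ.comp Computable.snd)))
  have hex (j : ℕ) : ∃ x, j < Nat.count p (x + 1) := ⟨_, (hlt j _).2 le_rfl⟩
  refine (Computable.find hP hex).of_eq fun j => ?_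
  exact (Nat.find_eq_iff _).2 ⟨(hlt j _).2 le_rfl, fun x hx => by simpa [hlt] using hx⟩

theorem Computable.invFun_of_bijective {β : Type*} [Primcodable β] [DecidableEq β] {f : ℕ → β}
    (hf : Computable f) (hbij : Bijective f) : Computable (invFun f) := by
  have hP : ComputablePred fun q : β × ℕ => f q.2 = q.1 :=
    Computable.computablePred (Primrec.eq.decide.to_comp.comp (hf.comp Computable.snd)
      Computable.fst)
  refine (Computable.find hP fun y => hbij.2 y).of_eq fun y => hbij.1 ?_
  rw [Nat.find_spec (hbij.2 y), invFun_eq (hbij.2 y)]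

theorem ComputablePerm.invFun {π : ℕ → ℕ} (hπ : ComputablePerm π) : ComputablePerm (invFun π) :=
  ⟨⟨(rightInverse_invFun hπ.1.2).injective, (leftInverse_invFun hπ.1.1).surjective⟩,
    hπ.2.invFun_of_bijective hπ.1⟩

theorem ComputablePred.image_of_computablePerm {S : Set ℕ} {π : ℕ → ℕ}
    (hS : ComputablePred (· ∈ S)) (hπ : ComputablePerm π) : ComputablePred (· ∈ π '' S) := by
  rw [Set.image_eq_preimage_of_inverse (leftInverse_invFun hπ.1.1) (rightInverse_invFun hπ.1.2)]
  exact hS.comp hπ.invFun.2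

theorem hasDensity_univ : HasDensity Set.univ 1 := by
  refine tendsto_const_nhds.congr' ?_
  filter_upwards [eventually_gt_atTop 0] with n hn
  simp [partialDensity, hn.ne']

theorem partialDensity_two_mul_le_half {D : Set ℕ} {a : ℕ} (ha : 0 < a)
    (hD : Disjoint D (Set.Ico a (2 * a))) : partialDensity D (2 * a) ≤ 1 / 2 := by
  have hsub : (Finset.range (2 * a)).filter (· ∈ D) ⊆ Finset.range a := by
    intro m hm
    simp only [Finset.mem_filter, Finset.mem_range] at hm ⊢
    by_contra hge
    exact hD.ne_of_mem hm.2 (Set.mem_Ico.2 ⟨not_lt.1 hge, hm.1⟩) rfl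
  have hcard : (((Finset.range (2 * a)).filter (· ∈ D)).card : ℝ) ≤ a := by
    exact_mod_cast (Finset.card_le_card hsub).trans (Finset.card_range a).le
  rw [partialDensity, div_le_iff₀ (by positivity)]
  push_cast
  linarith

theorem not_hasDensity_one_of_frequently_disjoint {D : Set ℕ}
    (h : ∃ᶠ a in atTop, Disjoint D (Set.Ico a (2 * a))) : ¬HasDensity D 1 := by
  intro hD
  have hbig : ∀ᶠ a in atTop, 0 < a ∧ 1 / 2 < partialDensity D (2 * a) :=
    (eventually_gt_atTop 0).and <| (tendsto_id.const_mul_atTop' two_pos).eventually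
      (hD.eventually (lt_mem_nhds (by norm_num)))
  obtain ⟨a, hdisj, ha, hlt⟩ := (h.and_eventually hbig).exists
  exact (partialDensity_two_mul_le_half ha hdisj).not_gt hlt

theorem ComputablePred.genericCaseComputable {A : Set ℕ} (hA : ComputablePred (· ∈ A)) :
    GenericCaseComputable A := by
  obtain ⟨_, hA⟩ := hA
  refine ⟨fun n => Part.some (decide (n ∈ A)), hA.partrec, fun n b hb => ?_, ?_⟩
  · rw [Part.mem_some_iff.1 hb, decide_eq_true_iff]
  · simpa using hasDensity_univ

theorem phi_encode (c : Code) : phi (Encodable.encode c) = c.eval := by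
  rw [phi, Denumerable.ofNat_encode]

theorem phi_partrec : Partrec₂ phi :=
  eval_part.comp ((Computable.ofNat Code).comp Computable.fst) Computable.snd

theorem IndexSet.computablePred_iff {S : Set ℕ} (hS : IndexSet S) :
    ComputablePred (· ∈ S) ↔ S = ∅ ∨ S = Set.univ := by
  have hrice := ComputablePred.rice₂ ((Encodable.encode : Code → ℕ) ⁻¹' S) fun cf cg h =>
    hS _ _ (by rw [phi_encode, phi_encode, h])
  have hcode :
      ComputablePred (· ∈ S) ↔ ComputablePred (· ∈ (Encodable.encode : Code → ℕ) ⁻¹' S) :=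
    ⟨fun h => h.comp Computable.encode, fun h =>
      (h.comp (Computable.ofNat Code)).of_eq fun n => by simp⟩
  have hinj : Injective (Set.preimage (Encodable.encode : Code → ℕ)) :=
    Surjective.preimage_injective fun n => ⟨_, Denumerable.encode_ofNat n⟩
  rw [hcode, hrice, ← Set.preimage_empty, ← Set.preimage_univ, hinj.eq_iff, hinj.eq_iff]

def phiBool (i : ℕ) : ℕ →. Bool := fun n => (phi i n).map (· = 1)

theorem phiBool_partrec : Partrec₂ phiBool :=
  phi_partrec.map (Primrec.eq.decide.to_comp.comp Computable.snd (Computable.const 1)).to₂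

theorem exists_phiBool_eq {g : ℕ →. Bool} (hg : Partrec g) : ∃ i, phiBool i = g := by
  obtain ⟨c, hc⟩ := Code.exists_code.1 (Partrec.nat_iff.1 (Partrec.map_encode_iff.2 hg))
  refine ⟨Encodable.encode c, funext fun n => ?_⟩
  rw [phiBool, phi_encode, hc, Part.map_map]
  exact Part.map_id' (fun b => by cases b <;> rfl) _

theorem le_encode_const (n : ℕ) : n ≤ Encodable.encode (Code.const n) := by
  induction n with
  | zero => exact Nat.zero_le _
  | succ n ih => exact ih.trans_lt (encode_lt_comp Code.succ (Code.const n)).2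

theorem le_encode_curry (c : Code) (n : ℕ) : n ≤ Encodable.encode (curry c n) :=
  (le_encode_const n).trans ((encode_lt_pair _ _).1.trans (encode_lt_comp _ _).2).le

/-- For a fixed point `c`, the index `encode (curry c k)` consults the guess of
`phiBool k.unpair.1` about itself and then computes `φ b` if the guess is `true`, `φ a` if not. -/
def diagonalize (a b : ℕ) (c : Code) (y : ℕ) : Part ℕ :=
  (phiBool y.unpair.1.unpair.1 (Encodable.encode (curry c y.unpair.1))).bind fun r =>
    phi (cond r b a) y.unpair.2

theorem diagonalize_partrec (a b : ℕ) : Partrec₂ (diagonalize a b) := by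
  have hunpair : Computable fun q : Code × ℕ => q.2.unpair := Computable.unpair.comp Computable.snd
  have hguess : Partrec fun q : Code × ℕ =>
      phiBool q.2.unpair.1.unpair.1 (Encodable.encode (curry q.1 q.2.unpair.1)) :=
    phiBool_partrec.comp
      (Computable.fst.comp (Computable.unpair.comp (Computable.fst.comp hunpair)))
      (Computable.encode.comp (primrec₂_curry.to_comp.comp Computable.fst
        (Computable.fst.comp hunpair)))
  exact hguess.bind (phi_partrec.comp
    (Computable.cond Computable.snd (Computable.const b) (Computable.const a))
    (Computable.snd.comp (hunpair.comp Computable.fst))).to₂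

theorem IndexSet.exists_diagonal_indices {S : Set ℕ} (hS : IndexSet S) {a b : ℕ} (ha : a ∈ S)
    (hb : b ∉ S) : ∃ e : ℕ → ℕ, Primrec e ∧ Injective e ∧ (∀ k, k ≤ e k) ∧
      ∀ g : ℕ →. Bool, Partrec g → PartialDescription g S →
        ∃ i, ∀ k, k.unpair.1 = i → ¬(g (e k)).Dom := by
  obtain ⟨c, hc⟩ := fixed_point₂ (diagonalize_partrec a b)
  let e k := Encodable.encode (curry c k)
  have hphi (k x : ℕ) :
      phi (e k) x = (phiBool k.unpair.1 (e k)).bind fun r => phi (cond r b a) x := by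
    rw [phi_encode, eval_curry, hc, diagonalize, Nat.unpair_pair]
  refine ⟨e, Primrec.encode.comp (primrec₂_curry.comp (Primrec.const c) Primrec.id),
    fun k k' h => (curry_inj (Encodable.encode_injective h)).2, le_encode_curry c,
    fun g hg hdesc => ?_⟩
  obtain ⟨i, rfl⟩ := exists_phiBool_eq hg
  refine ⟨i, fun k hk hdom => ?_⟩
  obtain ⟨r, hr⟩ := Part.dom_iff_mem.1 hdom
  have hsame : phi (e k) = phi (cond r b a) := by
    funext x
    rw [hphi, hk, Part.eq_some_iff.2 hr, Part.bind_some]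
  have hguess : r = true ↔ e k ∈ S := hdesc _ r hr
  have hindex : e k ∈ S ↔ cond r b a ∈ S := hS _ _ hsame
  cases r <;> simp_all

noncomputable def extendInOrder (p : ℕ → Prop) [DecidablePred p] (h : ℕ → ℕ) (m : ℕ) : ℕ :=
  if p m then h m else Nat.nth (· ∉ h '' {m | p m}) (Nat.count (¬p ·) m)

section ExtendInOrder

variable {p : ℕ → Prop} [DecidablePred p] {h : ℕ → ℕ}

theorem extendInOrder_bijective (hinj : Set.InjOn h {m | p m}) (hp : {m | ¬p m}.Infinite)
    (hq : {x | x ∉ h '' {m | p m}}.Infinite) : Bijective (extendInOrder p h) := by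
  have hnth (j : ℕ) : Nat.nth (· ∉ h '' {m | p m}) j ∉ h '' {m | p m} :=
    Nat.nth_mem_of_infinite hq j
  constructor
  · intro m m' hmm'
    unfold extendInOrder at hmm'
    by_cases hm : p m <;> by_cases hm' : p m' <;> simp only [hm, hm', if_true, if_false] at hmm'
    · exact hinj hm hm' hmm'
    · exact absurd ⟨m, hm, rfl⟩ (hmm' ▸ hnth _)
    · exact absurd ⟨m', hm', rfl⟩ (hmm' ▸ hnth _)
    · exact Nat.count_injective hm hm' (Nat.nth_injective hq hmm')
  · intro x
    by_cases hx : x ∈ h '' {m | p m}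
    · obtain ⟨m, hm, rfl⟩ := hx
      exact ⟨m, if_pos hm⟩
    · have hm := Nat.nth_mem_of_infinite hp (Nat.count (· ∉ h '' {m | p m}) x)
      refine ⟨_, (if_neg hm).trans ?_⟩
      rw [Nat.count_nth_of_infinite hp, Nat.nth_count hx]

theorem extendInOrder_computable (hp : ComputablePred p) (hh : Computable h)
    (hq : ComputablePred (· ∉ h '' {m | p m})) (hqinf : {x | x ∉ h '' {m | p m}}.Infinite) :
    Computable (extendInOrder p h) :=
  ComputablePred.ite hh ((hq.computable_nth hqinf).comp hp.not.computable_count) hp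

end ExtendInOrder

/-- The blocks `[4ⁿ, 2·4ⁿ)`, together with `0` (as `Nat.log 4 0 = 0`). -/
def blockSet : Set ℕ := {m | m < 2 * 4 ^ Nat.log 4 m}

def blockCol (m : ℕ) : ℕ := (Nat.log 4 m).unpair.1

theorem log_four_of_mem_Ico {n m : ℕ} (hm : m ∈ Set.Ico (4 ^ n) (2 * 4 ^ n)) :
    Nat.log 4 m = n :=
  Nat.log_eq_of_pow_le_of_lt_pow hm.1 (by rw [pow_succ]; linarith [hm.2])

theorem Ico_subset_blockSet (n : ℕ) : Set.Ico (4 ^ n) (2 * 4 ^ n) ⊆ blockSet := fun m hm => by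
  show m < 2 * 4 ^ Nat.log 4 m
  rw [log_four_of_mem_Ico hm]
  exact hm.2

theorem two_mul_pow_four_notMem_blockSet (n : ℕ) : 2 * 4 ^ n ∉ blockSet := by
  have hpos : 0 < 4 ^ n := by positivity
  have hlog : Nat.log 4 (2 * 4 ^ n) = n :=
    Nat.log_eq_of_pow_le_of_lt_pow (by omega) (by rw [pow_succ]; omega)
  simp [blockSet, hlog]

theorem blockSet_compl_infinite : blockSetᶜ.Infinite :=
  Set.infinite_of_injective_forall_mem
    (fun n n' h =>
      Nat.pow_right_injective (by norm_num : 2 ≤ 4) (Nat.eq_of_mul_eq_mul_left two_pos h))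
    two_mul_pow_four_notMem_blockSet

theorem primrecPred_mem_blockSet : PrimrecPred (· ∈ blockSet) :=
  Primrec.nat_lt.comp Primrec.id (Primrec.nat_mul.comp (Primrec.const 2)
    (Primrec.nat_pow.comp (Primrec.const 4) (Primrec.nat_log 4)))

theorem primrec_blockCol : Primrec blockCol :=
  Primrec.fst.comp (Primrec.unpair.comp (Primrec.nat_log 4))

def blockAssign (e : ℕ → ℕ) (m : ℕ) : ℕ := e (Nat.pair (blockCol m) m)

section BlockAssign

variable {e : ℕ → ℕ}

theorem blockAssign_injective (he : Injective e) : Injective (blockAssign e) :=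
  fun _ _ h => (Nat.pair_eq_pair.1 (he h)).2

theorem Primrec.blockAssign (he : Primrec e) : Primrec (blockAssign e) :=
  he.comp (Primrec₂.natPair.comp primrec_blockCol Primrec.id)

theorem primrecPred_mem_image_blockAssign (he : Primrec e) (hle : ∀ k, k ≤ e k) :
    PrimrecPred (· ∈ blockAssign e '' blockSet) :=
  primrecPred_mem_image_of_le primrecPred_mem_blockSet he.blockAssign fun _ =>
    (Nat.right_le_pair _ _).trans (hle _)

theorem compl_image_blockAssign_infinite (he : Injective e) :
    {x | x ∉ blockAssign e '' blockSet}.Infinite := by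
  refine Set.infinite_of_injective_forall_mem (f := fun m => e (Nat.pair (blockCol m + 1) m))
    (fun m m' h => (Nat.pair_eq_pair.1 (he h)).2) fun _ ⟨m', _, hm'⟩ => ?_
  obtain ⟨hcol, rfl⟩ := Nat.pair_eq_pair.1 (he hm')
  omega

theorem blockAssign_of_mem_Ico {i j m : ℕ}
    (hm : m ∈ Set.Ico (4 ^ Nat.pair i j) (2 * 4 ^ Nat.pair i j)) :
    blockAssign e m = e (Nat.pair i m) := by
  rw [blockAssign, blockCol, log_four_of_mem_Ico hm, Nat.unpair_pair]

end BlockAssign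

theorem exists_computablePerm_frequently_Ico_subset_image {e : ℕ → ℕ} (he : Primrec e)
    (hinj : Injective e) (hle : ∀ k, k ≤ e k) :
    ∃ π, ComputablePerm π ∧
      ∀ i, ∃ᶠ x in atTop, Set.Ico x (2 * x) ⊆ π '' (e '' {k | k.unpair.1 = i}) := by
  set τ := extendInOrder (· ∈ blockSet) (blockAssign e)
  have hτ : ComputablePerm τ :=
    ⟨extendInOrder_bijective (blockAssign_injective hinj).injOn blockSet_compl_infinite
        (compl_image_blockAssign_infinite hinj),
      extendInOrder_computable primrecPred_mem_blockSet.computablePred he.blockAssign.to_comp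
        (primrecPred_mem_image_blockAssign he hle).computablePred.not
        (compl_image_blockAssign_infinite hinj)⟩
  refine ⟨invFun τ, hτ.invFun, fun i => frequently_atTop.2 fun N =>
    ⟨4 ^ Nat.pair i N, (Nat.right_le_pair i N).trans (Nat.lt_pow_self (by norm_num)).le,
      fun m hm => ⟨e (Nat.pair i m), ⟨_, by simp, rfl⟩, ?_⟩⟩⟩
  have hτm : τ m = e (Nat.pair i m) :=
    (if_pos (Ico_subset_blockSet _ hm)).trans (blockAssign_of_mem_Ico hm)
  rw [← hτm]
  exact leftInverse_invFun hτ.1.1 m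

theorem IndexSet.exists_computablePerm_not_genericCaseComputable {S : Set ℕ} (hS : IndexSet S)
    {a b : ℕ} (ha : a ∈ S) (hb : b ∉ S) :
    ∃ π, ComputablePerm π ∧ ¬GenericCaseComputable (π '' S) := by
  obtain ⟨e, he, hinj, hle, hdiag⟩ := hS.exists_diagonal_indices ha hb
  obtain ⟨π, hπ, hcover⟩ := exists_computablePerm_frequently_Ico_subset_image he hinj hle
  refine ⟨π, hπ, fun ⟨f, hf, hdesc, hdens⟩ => ?_⟩
  have hfπ : PartialDescription (fun n => f (π n)) S := fun n r hr =>
    (hdesc _ r hr).trans hπ.1.1.mem_set_image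
  obtain ⟨i, hi⟩ := hdiag _ (hf.comp hπ.2) hfπ
  refine not_hasDensity_one_of_frequently_disjoint ((hcover i).mono fun _ hsub => ?_) hdens
  refine Set.disjoint_left.2 fun m hm hm' => ?_
  obtain ⟨_, ⟨k, hk, rfl⟩, rfl⟩ := hsub hm'
  exact hi k hk hm

theorem indexSet_intrinsically_gc_iff_computable (S : Set ℕ)
    (hS : IndexSet S) :
    ((∀ π : ℕ → ℕ, ComputablePerm π → GenericCaseComputable (π '' S)) ↔
        ComputablePred (fun n => n ∈ S)) ∧
      (ComputablePred (fun n => n ∈ S) ↔ (S = ∅ ∨ S = Set.univ)) := by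
  refine ⟨⟨fun H => ?_, fun hc π hπ => (hc.image_of_computablePerm hπ).genericCaseComputable⟩,
    hS.computablePred_iff⟩
  refine hS.computablePred_iff.2 (or_iff_not_imp_left.2 fun hne => ?_)
  by_contra hnu
  obtain ⟨a, ha⟩ := Set.nonempty_iff_ne_empty.2 hne
  obtain ⟨b, hb⟩ := (Set.ne_univ_iff_exists_notMem S).1 hnu
  obtain ⟨π, hπ, hgc⟩ := hS.exists_computablePerm_not_genericCaseComputable ha hb
  exact hgc (H π hπ)
end
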